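/- arXiv:2106.06128 — 2 statements merged into one kernel-verified Lean document; each statement's English description precedes it below -/
import Mathlib

section
/- (Submodularity) Under the grounded Laplacian setup, for any two subsets B ⊆ T ⊆ Q of the candidate edge set and any candidate edge e ∈ Q \ T, H(T ∪ {e}) − H(T) ≤ H(B ∪ {e}) − H(B). -/
/-! With `x_c = (M + diag c)⁻¹ (w + c)` the equilibrium opinions, adding `δ` to the diagonal changes
the overall opinion by `⟨(M + diag (c + δ))⁻¹ 𝟏, δ * (1 - x_c)⟩`. For a positive definite Z-matrix
`M`, `M + diag c` satisfies a minimum principle, so its inverse is entrywise nonnegative and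
antitone in `c`, while `x_c` is monotone in `c` and bounded by `1` as long as `w ≤ M 𝟏`. Both
factors of the marginal gain are therefore nonnegative and decrease as `c` grows.

For the grounded Laplacian `M = L_F` and `w = b`, the bound `b ≤ L_F 𝟏` holds because row `i`
of `L_F` sums to the number of neighbours of `i` outside `F`. -/

open Matrix Finset

namespace Matrix

variable {ι : Type*}

def IsZMatrix (M : Matrix ι ι ℝ) : Prop := ∀ ⦃i j⦄, i ≠ j → M i j ≤ 0

lemma IsZMatrix.submatrix {κ : Type*} {M : Matrix ι ι ℝ} (hZ : M.IsZMatrix) {f : κ → ι}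
    (hf : Function.Injective f) : (M.submatrix f f).IsZMatrix :=
  fun _ _ hij => hZ (hf.ne hij)

lemma IsZMatrix.add_diagonal [DecidableEq ι] {M : Matrix ι ι ℝ} (hZ : M.IsZMatrix)
    (d : ι → ℝ) : (M + diagonal d).IsZMatrix := fun i j hij => by
  simpa [diagonal_apply_ne _ hij] using hZ hij

lemma PosDef.add_diagonal [DecidableEq ι] {M : Matrix ι ι ℝ} (hM : M.PosDef) {c : ι → ℝ}
    (hc : 0 ≤ c) : (M + diagonal c).PosDef :=
  hM.add_posSemidef (posSemidef_diagonal_iff.2 hc)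

variable [Fintype ι]

namespace PosDef

variable {M : Matrix ι ι ℝ}

/-- Discrete minimum principle: for the negative part `y` of `z`, the off-diagonal terms of
`yᵀ M (z - y)` are nonnegative and the diagonal ones vanish, so `yᵀ M y ≤ yᵀ M z ≤ 0`. -/
lemma nonneg_of_mulVec_nonneg (hM : M.PosDef) (hZ : M.IsZMatrix) {z : ι → ℝ}
    (hz : 0 ≤ M *ᵥ z) : 0 ≤ z := by
  set y : ι → ℝ := fun i => min (z i) 0
  have hy : y ≤ 0 := fun i => min_le_right _ _
  have hzy : 0 ≤ z - y := fun i => sub_nonneg.2 (min_le_left _ _)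
  have hcompl : ∀ i, y i * (z - y) i = 0 := fun i => by
    rcases le_total 0 (z i) with h | h <;> simp [y, h]
  have hyMz : y ⬝ᵥ (M *ᵥ z) ≤ 0 :=
    sum_nonpos fun i _ => mul_nonpos_of_nonpos_of_nonneg (hy i) (hz i)
  have hyMzy : 0 ≤ y ⬝ᵥ (M *ᵥ (z - y)) := by
    simp only [dotProduct, mulVec, mul_sum]
    refine sum_nonneg fun i _ => sum_nonneg fun j _ => ?_
    rcases eq_or_ne i j with rfl | hij
    · rw [mul_left_comm, hcompl, mul_zero]
    · rw [← mul_assoc]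
      exact mul_nonneg (mul_nonneg_of_nonpos_of_nonpos (hy i) (hZ hij)) (hzy j)
  have hy0 : y = 0 := by
    by_contra hne
    have hpos := hM.dotProduct_mulVec_pos hne
    rw [star_trivial, show M *ᵥ y = M *ᵥ z - M *ᵥ (z - y) by rw [mulVec_sub]; abel,
      dotProduct_sub] at hpos
    linarith
  intro i
  simpa [y] using congrFun hy0 i

lemma le_of_mulVec_le (hM : M.PosDef) (hZ : M.IsZMatrix) {x y : ι → ℝ}
    (h : M *ᵥ x ≤ M *ᵥ y) : x ≤ y :=
  sub_nonneg.1 <| hM.nonneg_of_mulVec_nonneg hZ <| by rwa [mulVec_sub, sub_nonneg]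

end PosDef

variable [DecidableEq ι]

lemma mulVec_add_diagonal {R : Type*} [CommRing R] (A : Matrix ι ι R) (d x : ι → R) :
    (A + diagonal d) *ᵥ x = A *ᵥ x + d * x := by
  ext i
  simp [add_mulVec, mulVec_diagonal]

lemma add_diagonal_mulVec_eq {R : Type*} [CommRing R] (A : Matrix ι ι R) (c c' x : ι → R) :
    (A + diagonal c') *ᵥ x = (A + diagonal c) *ᵥ x + (c' - c) * x := by
  rw [mulVec_add_diagonal, mulVec_add_diagonal]
  ring

lemma mulVec_inv_mulVec {R : Type*} [CommRing R] {A : Matrix ι ι R} (hA : IsUnit A.det)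
    (v : ι → R) : A *ᵥ (A⁻¹ *ᵥ v) = v := by
  rw [mulVec_mulVec, mul_nonsing_inv A hA, one_mulVec]

lemma dotProduct_inv_add_diagonal_mulVec_sub {R : Type*} [CommRing R] {A : Matrix ι ι R}
    (hA : IsUnit A.det) {δ : ι → R} (hB : IsUnit (A + diagonal δ).det) (u v : ι → R) :
    u ⬝ᵥ ((A + diagonal δ)⁻¹ *ᵥ (v + δ)) - u ⬝ᵥ (A⁻¹ *ᵥ v)
      = u ⬝ᵥ ((A + diagonal δ)⁻¹ *ᵥ (δ * (1 - A⁻¹ *ᵥ v))) := by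
  set x := A⁻¹ *ᵥ v
  have hv : v + δ = (A + diagonal δ) *ᵥ x + δ * (1 - x) := by
    rw [mulVec_add_diagonal, mulVec_inv_mulVec hA]
    ring
  rw [hv, mulVec_add, mulVec_mulVec, nonsing_inv_mul _ hB, one_mulVec, dotProduct_add]
  ring

namespace PosDef

variable {M : Matrix ι ι ℝ}

lemma isUnit_det (hM : M.PosDef) : IsUnit M.det :=
  (isUnit_iff_isUnit_det M).1 hM.isUnit

lemma vecMul_inv (hM : M.PosDef) (v : ι → ℝ) : v ᵥ* M⁻¹ = M⁻¹ *ᵥ v := by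
  rw [← vecMul_transpose, (isHermitian_iff_isSymm.1 hM.isHermitian).inv.eq]

lemma inv_mulVec_nonneg (hM : M.PosDef) (hZ : M.IsZMatrix) {v : ι → ℝ} (hv : 0 ≤ v) :
    0 ≤ M⁻¹ *ᵥ v :=
  hM.nonneg_of_mulVec_nonneg hZ <| by rwa [mulVec_inv_mulVec hM.isUnit_det]

lemma inv_mulVec_le_one (hM : M.PosDef) (hZ : M.IsZMatrix) {w : ι → ℝ}
    (hw : w ≤ M *ᵥ 1) : M⁻¹ *ᵥ w ≤ 1 :=
  hM.le_of_mulVec_le hZ <| by rwa [mulVec_inv_mulVec hM.isUnit_det]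

variable {c c' : ι → ℝ}

lemma inv_add_diagonal_mulVec_le_of_le (hM : M.PosDef) (hZ : M.IsZMatrix) (hc : 0 ≤ c)
    (hcc' : c ≤ c') {v : ι → ℝ} (hv : 0 ≤ v) :
    (M + diagonal c')⁻¹ *ᵥ v ≤ (M + diagonal c)⁻¹ *ᵥ v := by
  have hA := hM.add_diagonal hc
  have hA' := hM.add_diagonal (hc.trans hcc')
  set p := (M + diagonal c)⁻¹ *ᵥ v
  have hp : 0 ≤ p := hA.inv_mulVec_nonneg (hZ.add_diagonal c) hv
  refine hA'.le_of_mulVec_le (hZ.add_diagonal c') fun i => ?_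
  have hMp : (M + diagonal c') *ᵥ p = v + (c' - c) * p := by
    rw [add_diagonal_mulVec_eq M c, mulVec_inv_mulVec hA.isUnit_det]
  rw [mulVec_inv_mulVec hA'.isUnit_det, hMp]
  exact le_add_of_nonneg_right (mul_nonneg (sub_nonneg.2 (hcc' i)) (hp i))

lemma inv_add_diagonal_mulVec_add_le_one (hM : M.PosDef) (hZ : M.IsZMatrix) (hc : 0 ≤ c)
    {w : ι → ℝ} (hw : w ≤ M *ᵥ 1) : (M + diagonal c)⁻¹ *ᵥ (w + c) ≤ 1 :=
  (hM.add_diagonal hc).inv_mulVec_le_one (hZ.add_diagonal c) <| by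
    rw [mulVec_add_diagonal, mul_one]
    exact add_le_add_left hw c

lemma inv_add_diagonal_mulVec_add_le_of_le (hM : M.PosDef) (hZ : M.IsZMatrix) (hc : 0 ≤ c)
    (hcc' : c ≤ c') {w : ι → ℝ} (hw : w ≤ M *ᵥ 1) :
    (M + diagonal c)⁻¹ *ᵥ (w + c) ≤ (M + diagonal c')⁻¹ *ᵥ (w + c') := by
  have hA := hM.add_diagonal hc
  have hA' := hM.add_diagonal (hc.trans hcc')
  set x := (M + diagonal c)⁻¹ *ᵥ (w + c)
  have hx : x ≤ 1 := hM.inv_add_diagonal_mulVec_add_le_one hZ hc hw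
  refine hA'.le_of_mulVec_le (hZ.add_diagonal c') fun i => ?_
  have hMx : (M + diagonal c') *ᵥ x = w + c' - (c' - c) * (1 - x) := by
    rw [add_diagonal_mulVec_eq M c, mulVec_inv_mulVec hA.isUnit_det]
    ring
  rw [mulVec_inv_mulVec hA'.isUnit_det, hMx]
  exact sub_le_self _ (mul_nonneg (sub_nonneg.2 (hcc' i)) (sub_nonneg.2 (hx i)))

end PosDef

end Matrix

section Opinion

variable {ι : Type*} [Fintype ι] [DecidableEq ι]

noncomputable def overallOpinion (M : Matrix ι ι ℝ) (w c : ι → ℝ) : ℝ :=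
  1 ⬝ᵥ ((M + diagonal c)⁻¹ *ᵥ (w + c))

variable {M : Matrix ι ι ℝ} {c c' δ : ι → ℝ}

lemma overallOpinion_add_sub (hM : M.PosDef) (hc : 0 ≤ c) (hδ : 0 ≤ δ) (w : ι → ℝ) :
    overallOpinion M w (c + δ) - overallOpinion M w c
      = ((M + diagonal (c + δ))⁻¹ *ᵥ 1) ⬝ᵥ (δ * (1 - (M + diagonal c)⁻¹ *ᵥ (w + c))) := by
  have hA := hM.add_diagonal hc
  have hB := hM.add_diagonal (add_nonneg hc hδ)
  have hsplit : M + diagonal c + diagonal δ = M + diagonal (c + δ) := by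
    rw [add_assoc, diagonal_add]; rfl
  have key := dotProduct_inv_add_diagonal_mulVec_sub hA.isUnit_det
    (hsplit ▸ hB.isUnit_det) 1 (w + c)
  rw [hsplit] at key
  rw [overallOpinion, overallOpinion, ← add_assoc w, key, dotProduct_mulVec, hB.vecMul_inv]

theorem overallOpinion_add_sub_le (hM : M.PosDef) (hZ : M.IsZMatrix) {w : ι → ℝ}
    (hw : w ≤ M *ᵥ 1) (hc : 0 ≤ c) (hcc' : c ≤ c') (hδ : 0 ≤ δ) :
    overallOpinion M w (c' + δ) - overallOpinion M w c'
      ≤ overallOpinion M w (c + δ) - overallOpinion M w c := by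
  have hc' := hc.trans hcc'
  rw [overallOpinion_add_sub hM hc hδ, overallOpinion_add_sub hM hc' hδ]
  refine sum_le_sum fun k _ => mul_le_mul ?_ ?_ ?_ ?_
  · exact hM.inv_add_diagonal_mulVec_le_of_le hZ (add_nonneg hc hδ) (add_le_add_left hcc' δ)
      zero_le_one k
  · exact mul_le_mul_of_nonneg_left (sub_le_sub_left
      (hM.inv_add_diagonal_mulVec_add_le_of_le hZ hc hcc' hw k) 1) (hδ k)
  · exact mul_nonneg (hδ k) (sub_nonneg.2 (hM.inv_add_diagonal_mulVec_add_le_one hZ hc' hw k))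
  · exact (hM.add_diagonal (add_nonneg hc hδ)).inv_mulVec_nonneg
      (hZ.add_diagonal _) zero_le_one k

end Opinion

namespace SimpleGraph

variable {V : Type*} [Fintype V] [DecidableEq V] (G : SimpleGraph V) [DecidableRel G.Adj]

lemma lapMatrix_apply_of_ne {i j : V} (hij : i ≠ j) :
    G.lapMatrix ℝ i j = -(if G.Adj i j then 1 else 0) := by
  simp [lapMatrix, degMatrix, diagonal_apply_ne _ hij, adjMatrix_apply]

lemma isZMatrix_lapMatrix : (G.lapMatrix ℝ).IsZMatrix := fun i j hij => by
  rw [G.lapMatrix_apply_of_ne hij, neg_nonpos]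
  split_ifs <;> norm_num

lemma lapMatrix_submatrix_mulVec_one_apply (F : Finset V) (i : F) :
    ((G.lapMatrix ℝ).submatrix (fun j : F => (j : V)) (fun j : F => (j : V)) *ᵥ 1) i
      = #{v ∈ Fᶜ | G.Adj i v} := by
  have hrow : ∑ v, G.lapMatrix ℝ i v = 0 := by
    simpa [mulVec, dotProduct] using
      congrFun (G.lapMatrix_mulVec_const_eq_zero (R := ℝ)) (i : V)
  have hout : ∑ v ∈ Fᶜ, G.lapMatrix ℝ i v = -#{v ∈ Fᶜ | G.Adj i v} := by
    rw [card_filter, Nat.cast_sum, ← sum_neg_distrib]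
    refine sum_congr rfl fun v hv => ?_
    rw [G.lapMatrix_apply_of_ne (ne_of_mem_of_not_mem i.2 (mem_compl.1 hv))]
    push_cast
    rfl
  rw [← sum_add_sum_compl F, hout] at hrow
  simp only [mulVec, dotProduct, submatrix_apply, Pi.one_apply, mul_one]
  rw [sum_coe_sort F (G.lapMatrix ℝ i)]
  linarith

end SimpleGraph

lemma card_filter_snd_insert {α β R : Type*} [DecidableEq α] [DecidableEq β]
    [AddMonoidWithOne R] {P : Finset (α × β)} {e : α × β} (he : e ∉ P) (v : β) :
    (#{f ∈ insert e P | f.2 = v} : R) = #{f ∈ P | f.2 = v} + (Pi.single e.2 1 : β → R) v := by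
  rw [filter_insert, Pi.single_apply]
  by_cases h : e.2 = v
  · rw [if_pos h, if_pos h.symm, card_insert_of_notMem fun hm => he (mem_filter.1 hm).1,
      Nat.cast_succ]
  · rw [if_neg h, if_neg (Ne.symm h), add_zero]

theorem stmt4_general {V : Type} [Fintype V] [DecidableEq V]
    (G : SimpleGraph V) [DecidableRel G.Adj]
    (F S1 : Finset V)
    (hFS1 : Disjoint F S1)
    (LF : Matrix F F ℝ)
    (hLF : LF = (G.lapMatrix ℝ).submatrix (fun i : F => (i : V)) (fun i : F => (i : V)))
    (hPD : LF.PosDef)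
    (b : F → ℝ)
    (hb : ∀ i : F, b i = ((S1.filter fun a => G.Adj a (i : V)).card : ℝ))
    (Q : Finset (V × V))
    (hQ : ∀ e ∈ Q, e.1 ∈ S1 ∧ e.2 ∈ F ∧ ¬ G.Adj e.1 e.2)
    (c : Finset (V × V) → F → ℝ)
    (hc : ∀ P, ∀ i : F, c P i = ((P.filter fun e => e.2 = (i : V)).card : ℝ))
    (H : Finset (V × V) → ℝ)
    (hH : ∀ P ⊆ Q, H P = (1 : F → ℝ) ⬝ᵥ ((LF + Matrix.diagonal (c P))⁻¹ *ᵥ (b + c P)))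
    (B T : Finset (V × V)) (hBT : B ⊆ T) (hTQ : T ⊆ Q)
    (e : V × V) (he : e ∈ Q \ T) :
    H (insert e T) - H T ≤ H (insert e B) - H B := by
  obtain ⟨heQ, heT⟩ := mem_sdiff.mp he
  have hZ : LF.IsZMatrix := hLF ▸ G.isZMatrix_lapMatrix.submatrix Subtype.val_injective
  have hb_le : b ≤ LF *ᵥ 1 := fun i => by
    rw [hb, hLF, G.lapMatrix_submatrix_mulVec_one_apply]
    refine Nat.cast_le.2 (card_le_card fun a ha => ?_)
    rw [mem_filter] at ha ⊢
    exact ⟨mem_compl.2 (disjoint_right.1 hFS1 ha.1), ha.2.symm⟩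
  have hc_nonneg : ∀ P, 0 ≤ c P := fun P i => (hc P i).symm ▸ Nat.cast_nonneg _
  have hc_mono : c B ≤ c T := fun i => by
    rw [hc, hc]
    exact Nat.cast_le.2 (card_le_card (filter_subset_filter _ hBT))
  have hc_insert : ∀ P, e ∉ P → c (insert e P) = c P + Pi.single ⟨e.2, (hQ e heQ).2.1⟩ 1 :=
    fun P hP => funext fun i => by
      rw [Pi.add_apply, hc, hc, card_filter_snd_insert hP, Pi.single_apply, Pi.single_apply]
      simp only [Subtype.ext_iff]
  have hBQ := hBT.trans hTQ
  rw [hH _ (insert_subset heQ hTQ), hH _ hTQ, hH _ (insert_subset heQ hBQ), hH _ hBQ,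
    hc_insert T heT, hc_insert B fun h => heT (hBT h)]
  exact overallOpinion_add_sub_le hPD hZ hb_le (hc_nonneg B) hc_mono
    (Pi.single_nonneg.2 zero_le_one)

/-- **Submodularity.** Under the grounded Laplacian setup, for any two subsets `B ⊆ T ⊆ Q` of the
candidate edge set and any candidate edge `e ∈ Q \\ T`,
`H(T ∪ {e}) − H(T) ≤ H(B ∪ {e}) − H(B)`, where for `P ⊆ Q` the overall opinion is
`H(P) = 𝟏ᵀ (L_F + diag(c_P))⁻¹ (b + c_P)` and `(c_P)ᵢ = |{a ∈ S₁ : (a,i) ∈ P}|`. -/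
theorem stmt4 {V : Type} [Fintype V] [DecidableEq V]
    (G : SimpleGraph V) [DecidableRel G.Adj] (hconn : G.Connected)
    (F S0 S1 : Finset V)
    (hFne : F.Nonempty) (hS1ne : S1.Nonempty)
    (hFS0 : Disjoint F S0) (hFS1 : Disjoint F S1) (hS0S1 : Disjoint S0 S1)
    (hcover : F ∪ S0 ∪ S1 = Finset.univ)
    (LF : Matrix F F ℝ)
    (hLF : LF = (G.lapMatrix ℝ).submatrix (fun i : F => (i : V)) (fun i : F => (i : V)))
    (hPD : LF.PosDef) (hnn : ∀ i j : F, 0 ≤ LF⁻¹ i j)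
    (b : F → ℝ)
    (hb : ∀ i : F, b i = ((S1.filter fun a => G.Adj a (i : V)).card : ℝ))
    (Q : Finset (V × V))
    (hQ : ∀ e ∈ Q, e.1 ∈ S1 ∧ e.2 ∈ F ∧ ¬ G.Adj e.1 e.2)
    (c : Finset (V × V) → F → ℝ)
    (hc : ∀ P, ∀ i : F, c P i = ((P.filter fun e => e.2 = (i : V)).card : ℝ))
    (H : Finset (V × V) → ℝ)
    (hH : ∀ P ⊆ Q, H P = (1 : F → ℝ) ⬝ᵥ ((LF + Matrix.diagonal (c P))⁻¹ *ᵥ (b + c P)))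
    (B T : Finset (V × V)) (hBT : B ⊆ T) (hTQ : T ⊆ Q)
    (e : V × V) (he : e ∈ Q \ T) :
    H (insert e T) - H T ≤ H (insert e B) - H B :=
  stmt4_general G F S1 hFS1 LF hLF hPD b hb Q hQ c hc H hH B T hBT hTQ e he
end

section
/- Under the grounded Laplacian setup with n ≥ 2, let 0 < ε < 1/2 and δ₁ = ε/(2n²√(6(n²−1))). Let h̃ = L_F^{-1}𝟏 and suppose h ∈ ℝ^F satisfies ‖h − h̃‖_{L_F} ≤ δ₁ ‖h̃‖_{L_F}. Then for every i ∈ F: (1 − ε/6) h̃_i ≤ h_i ≤ (1 + ε/6) h̃_i; that is, h_i is an (ε/6)-approximation of 𝟏ᵀ L_F^{-1} e_i. -/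
/-!
Write `t = L_F⁻¹ 𝟏` and `R = L_F⁻¹`. In the `L_F`-inner product the coordinate `v ↦ vᵢ` is
represented by `R eᵢ`, so Cauchy–Schwarz gives `(hᵢ - tᵢ)² ≤ Rᵢᵢ ‖h - t‖² ≤ tᵢ δ₁² ‖t‖²`, the last
step because `R ≥ 0` entrywise. Summing squared differences along a path from a follower to a
leader gives `x_k² ≤ 2 (n - 1) ‖x‖²`, whence `‖t‖² = 𝟏ᵀ t ≤ 2 (n - 1)³`; and Cauchy–Schwarz once
more gives `1 ≤ Rᵢᵢ (L_F)ᵢᵢ ≤ n tᵢ`. Altogether `(hᵢ - tᵢ)² ≤ 2 n (n - 1)³ δ₁² tᵢ² ≤ (ε/6)² tᵢ²`.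
-/

open Matrix Finset

namespace Matrix

variable {ι : Type*} [Fintype ι]

theorem IsSymm.dotProduct_mulVec_comm {M : Matrix ι ι ℝ} (hM : M.IsSymm) (x y : ι → ℝ) :
    x ⬝ᵥ M *ᵥ y = y ⬝ᵥ M *ᵥ x := by
  rw [dotProduct_mulVec, ← mulVec_transpose, hM.eq, dotProduct_comm]

theorem PosSemidef.dotProduct_mulVec_sq_le {M : Matrix ι ι ℝ} (hM : M.PosSemidef)
    (x y : ι → ℝ) : (x ⬝ᵥ M *ᵥ y) ^ 2 ≤ (x ⬝ᵥ M *ᵥ x) * (y ⬝ᵥ M *ᵥ y) := by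
  classical
  have hsymm : M.IsSymm := isHermitian_iff_isSymm.1 hM.isHermitian
  simpa only [toBilin'_apply'] using (toBilin' M).apply_sq_le_of_symm
    (fun v => by simpa only [toBilin'_apply', star_trivial] using hM.dotProduct_mulVec_nonneg v)
    (LinearMap.BilinForm.isSymm_iff.1 (isSymm_toBilin'_iff_isSymm.2 hsymm)) x y

/-- `(1 : Matrix κ κ ℝ).submatrix id e *ᵥ x` spreads `x` along `e`; for an embedding `e` this is
the extension of `x` by zero. -/
theorem dotProduct_submatrix_mulVec {κ : Type*} [Fintype κ] [DecidableEq κ]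
    (M : Matrix κ κ ℝ) (e : ι → κ) (x : ι → ℝ) :
    x ⬝ᵥ M.submatrix e e *ᵥ x =
      ((1 : Matrix κ κ ℝ).submatrix id e *ᵥ x) ⬝ᵥ
        M *ᵥ ((1 : Matrix κ κ ℝ).submatrix id e *ᵥ x) := by
  have hsub : M.submatrix e e =
      ((1 : Matrix κ κ ℝ).submatrix id e)ᵀ * M * (1 : Matrix κ κ ℝ).submatrix id e := by
    ext i j
    simp [mul_apply, one_apply]
  rw [hsub, ← mulVec_mulVec, ← mulVec_mulVec, dotProduct_mulVec _ _ (M *ᵥ _), vecMul_transpose]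

theorem apply_self_le_mulVec_one {A : Matrix ι ι ℝ} (hA : ∀ i j, 0 ≤ A i j) (i : ι) :
    A i i ≤ (A *ᵥ 1) i := by
  simpa [mulVec, dotProduct] using single_le_sum (fun j _ => hA i j) (mem_univ i)

variable [DecidableEq ι] {M : Matrix ι ι ℝ}

theorem PosDef.mulVec_inv_mulVec (hM : M.PosDef) (v : ι → ℝ) : M *ᵥ (M⁻¹ *ᵥ v) = v := by
  rw [mulVec_mulVec, mul_nonsing_inv _ ((isUnit_iff_isUnit_det M).1 hM.isUnit), one_mulVec]

/-- `M⁻¹ eᵢ` represents the `i`-th coordinate in the inner product of `M`. -/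
theorem PosDef.sq_apply_le_inv_apply_mul (hM : M.PosDef) (v : ι → ℝ) (i : ι) :
    v i ^ 2 ≤ M⁻¹ i i * (v ⬝ᵥ M *ᵥ v) := by
  have hsymm : M.IsSymm := isHermitian_iff_isSymm.1 hM.isHermitian
  have hav : (M⁻¹ *ᵥ Pi.single i 1) ⬝ᵥ M *ᵥ v = v i := by
    rw [hsymm.dotProduct_mulVec_comm, hM.mulVec_inv_mulVec, dotProduct_single_one]
  have haa : (M⁻¹ *ᵥ Pi.single i 1) ⬝ᵥ M *ᵥ (M⁻¹ *ᵥ Pi.single i 1) = M⁻¹ i i := by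
    rw [hM.mulVec_inv_mulVec, dotProduct_single_one, mulVec_single_one, col_apply]
  simpa only [hav, haa] using hM.posSemidef.dotProduct_mulVec_sq_le (M⁻¹ *ᵥ Pi.single i 1) v

theorem PosDef.one_le_inv_apply_mul_apply (hM : M.PosDef) (i : ι) : 1 ≤ M⁻¹ i i * M i i := by
  simpa [mulVec_single_one] using hM.sq_apply_le_inv_apply_mul (Pi.single i 1) i

theorem PosDef.one_le_apply_mul_inv_mulVec_one_apply (hM : M.PosDef)
    (hnn : ∀ i j, 0 ≤ M⁻¹ i j) (i : ι) : 1 ≤ M i i * (M⁻¹ *ᵥ 1) i :=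
  calc 1 ≤ M⁻¹ i i * M i i := hM.one_le_inv_apply_mul_apply i
    _ ≤ (M⁻¹ *ᵥ 1) i * M i i := by
        gcongr
        · exact hM.diag_pos.le
        · exact apply_self_le_mulVec_one hnn i
    _ = M i i * (M⁻¹ *ᵥ 1) i := mul_comm _ _

theorem PosDef.sq_sub_inv_mulVec_one_apply_le_mul_sq (hM : M.PosDef)
    (hnn : ∀ i j, 0 ≤ M⁻¹ i j) (h : ι → ℝ) (i : ι) :
    (h i - (M⁻¹ *ᵥ 1) i) ^ 2 ≤
      M i i * ((h - M⁻¹ *ᵥ 1) ⬝ᵥ M *ᵥ (h - M⁻¹ *ᵥ 1)) * (M⁻¹ *ᵥ 1) i ^ 2 := by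
  set t := M⁻¹ *ᵥ 1
  set Q := (h - t) ⬝ᵥ M *ᵥ (h - t)
  have hQ : 0 ≤ Q := by
    simpa only [star_trivial] using hM.posSemidef.dotProduct_mulVec_nonneg (h - t)
  have hdiag : M⁻¹ i i ≤ t i := apply_self_le_mulVec_one hnn i
  calc (h i - t i) ^ 2 ≤ M⁻¹ i i * Q := hM.sq_apply_le_inv_apply_mul (h - t) i
    _ ≤ t i * Q := by gcongr
    _ ≤ (M i i * t i) * t i * Q := by
        gcongr
        exact le_mul_of_one_le_left (hM.inv.diag_pos.le.trans hdiag)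
          (hM.one_le_apply_mul_inv_mulVec_one_apply hnn i)
    _ = M i i * Q * t i ^ 2 := by ring

/-- With `t = M⁻¹ 𝟏` the form is `Q = ∑ₖ tₖ`, so Cauchy–Schwarz and the coordinate bound give
`Q² ≤ (card ι)² c Q`. -/
theorem PosDef.dotProduct_mulVec_inv_mulVec_one_le (hM : M.PosDef) {c : ℝ} (hc : 0 ≤ c)
    (hcoord : ∀ v k, v k ^ 2 ≤ c * (v ⬝ᵥ M *ᵥ v)) :
    (M⁻¹ *ᵥ 1) ⬝ᵥ M *ᵥ (M⁻¹ *ᵥ 1) ≤ Fintype.card ι ^ 2 * c := by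
  have hsum : (M⁻¹ *ᵥ 1) ⬝ᵥ M *ᵥ (M⁻¹ *ᵥ 1) = ∑ k, (M⁻¹ *ᵥ 1) k := by
    rw [hM.mulVec_inv_mulVec, dotProduct_one]
  set t := M⁻¹ *ᵥ 1
  set Q := t ⬝ᵥ M *ᵥ t
  have hQ0 : 0 ≤ Q := by simpa using hM.posSemidef.dotProduct_mulVec_nonneg t
  have hsq : Q * Q ≤ Fintype.card ι ^ 2 * c * Q := calc
    Q * Q ≤ Fintype.card ι * ∑ k, t k ^ 2 := by
      simpa [hsum, sq] using sq_sum_le_card_mul_sum_sq (s := univ) (f := t)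
    _ ≤ Fintype.card ι * ∑ _k : ι, c * Q := by gcongr; exact hcoord t _
    _ = Fintype.card ι ^ 2 * c * Q := by simp only [sum_const, card_univ, nsmul_eq_mul]; ring
  rcases hQ0.eq_or_lt with hQ0 | hQpos
  · rw [← hQ0]; positivity
  · exact le_of_mul_le_mul_right hsq hQpos

end Matrix

namespace SimpleGraph

variable {V : Type*} {G : SimpleGraph V}

theorem Walk.sub_eq_sum_darts (x : V → ℝ) {a b : V} (p : G.Walk a b) :
    x a - x b = (p.darts.map fun d => x d.fst - x d.snd).sum := by
  induction p with
  | nil => simp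
  | cons h p ih => simp [← ih]

variable [Fintype V] [DecidableRel G.Adj]

theorem sum_darts_sq_sub (x : V → ℝ) :
    ∑ d : G.Dart, (x d.fst - x d.snd) ^ 2
      = ∑ i, ∑ j, if G.Adj i j then (x i - x j) ^ 2 else 0 := by
  rw [← sum_product', ← sum_filter]
  exact sum_bij (fun d _ => d.toProd) (fun d _ => by simp [d.adj])
    (fun _ _ _ _ h => Dart.toProd_injective h)
    (fun p hp => ⟨⟨p, (mem_filter.1 hp).2⟩, mem_univ _, rfl⟩) (fun _ _ => rfl)

theorem Walk.IsPath.sq_sub_le_length_mul_sum_darts {a b : V} {p : G.Walk a b} (hp : p.IsPath)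
    (x : V → ℝ) :
    (x a - x b) ^ 2 ≤ p.length * ∑ d : G.Dart, (x d.fst - x d.snd) ^ 2 := by
  classical
  have hnodup := darts_nodup_of_support_nodup hp.support_nodup
  calc (x a - x b) ^ 2 = (∑ d ∈ p.darts.toFinset, (x d.fst - x d.snd)) ^ 2 := by
        rw [p.sub_eq_sum_darts, List.sum_toFinset _ hnodup]
    _ ≤ #p.darts.toFinset * ∑ d ∈ p.darts.toFinset, (x d.fst - x d.snd) ^ 2 :=
        sq_sum_le_card_mul_sum_sq
    _ ≤ p.length * ∑ d : G.Dart, (x d.fst - x d.snd) ^ 2 := by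
        rw [List.toFinset_card_of_nodup hnodup, length_darts]
        gcongr _ * ?_
        exact sum_le_sum_of_subset_of_nonneg (subset_univ _) fun _ _ _ => sq_nonneg _

variable [DecidableEq V]

theorem lapMatrix_apply_self_le_card (v : V) : G.lapMatrix ℝ v v ≤ Fintype.card V := by
  simpa [lapMatrix, degMatrix] using (Nat.cast_le (α := ℝ)).2 (G.degree_lt_card_verts v).le

/-- Each dart is counted once for each orientation of its edge, hence the factor `2`. -/
theorem Connected.sq_sub_le_mul_lapMatrix (hG : G.Connected) (x : V → ℝ) (a b : V) :
    (x a - x b) ^ 2 ≤ 2 * (Fintype.card V - 1) * (x ⬝ᵥ G.lapMatrix ℝ *ᵥ x) := by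
  obtain ⟨p, hp⟩ := (hG a b).some.toPath
  have hlen : (p.length : ℝ) ≤ Fintype.card V - 1 := by
    have : ((p.length + 1 : ℕ) : ℝ) ≤ Fintype.card V := by exact_mod_cast hp.length_lt
    push_cast at this
    linarith
  have hform : x ⬝ᵥ G.lapMatrix ℝ *ᵥ x = (∑ d : G.Dart, (x d.fst - x d.snd) ^ 2) / 2 := by
    rw [← toLinearMap₂'_apply', lapMatrix_toLinearMap₂', sum_darts_sq_sub]
  rw [hform]
  calc (x a - x b) ^ 2 ≤ p.length * ∑ d : G.Dart, (x d.fst - x d.snd) ^ 2 :=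
        hp.sq_sub_le_length_mul_sum_darts x
    _ ≤ (Fintype.card V - 1) * ∑ d : G.Dart, (x d.fst - x d.snd) ^ 2 := by gcongr
    _ = _ := by ring

abbrev groundedLapMatrix (G : SimpleGraph V) [DecidableRel G.Adj] (F : Finset V) :
    Matrix F F ℝ :=
  (G.lapMatrix ℝ).submatrix Subtype.val Subtype.val

theorem Connected.sq_le_mul_groundedLapMatrix (hG : G.Connected) {F : Finset V} {s : V}
    (hs : s ∉ F) (x : F → ℝ) (k : F) :
    x k ^ 2 ≤ 2 * (Fintype.card V - 1) * (x ⬝ᵥ G.groundedLapMatrix F *ᵥ x) := by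
  set y := (1 : Matrix V V ℝ).submatrix id ((↑) : F → V) *ᵥ x
  have hyk : y k = x k := by
    simp [y, mulVec, dotProduct, one_apply]
  have hys : y s = 0 := by
    simp only [y, mulVec, dotProduct, submatrix_apply, id, one_apply, ite_mul, one_mul, zero_mul]
    exact sum_eq_zero fun i _ => if_neg fun (h : s = i) => hs (h ▸ i.2)
  rw [dotProduct_submatrix_mulVec, ← hyk, ← sub_zero (y k), ← hys]
  exact hG.sq_sub_le_mul_lapMatrix y k s

theorem Connected.inv_mulVec_one_dotProduct_groundedLapMatrix_le (hG : G.Connected)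
    {F : Finset V} {s : V} (hs : s ∉ F) (hPD : (G.groundedLapMatrix F).PosDef) :
    (G.groundedLapMatrix F)⁻¹ *ᵥ 1 ⬝ᵥ G.groundedLapMatrix F *ᵥ ((G.groundedLapMatrix F)⁻¹ *ᵥ 1)
      ≤ 2 * (Fintype.card V - 1) ^ 3 := by
  have hcard : (Fintype.card F : ℝ) ≤ Fintype.card V - 1 := by
    rw [le_sub_iff_add_le, Fintype.card_coe]
    exact_mod_cast card_lt_univ_of_notMem hs
  have hc : (0 : ℝ) ≤ 2 * (Fintype.card V - 1) := by
    linarith [(Fintype.card F).cast_nonneg (α := ℝ)]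
  calc _ ≤ (Fintype.card F : ℝ) ^ 2 * (2 * (Fintype.card V - 1)) :=
        hPD.dotProduct_mulVec_inv_mulVec_one_le hc (hG.sq_le_mul_groundedLapMatrix hs)
    _ ≤ ((Fintype.card V : ℝ) - 1) ^ 2 * (2 * (Fintype.card V - 1)) := by gcongr
    _ = _ := by ring

end SimpleGraph

theorem sq_div_mul_sqrt_sq_mul_le {N : ℝ} (hN : 2 ≤ N) (ε : ℝ) :
    (ε / (2 * N ^ 2 * √(6 * (N ^ 2 - 1)))) ^ 2 * (2 * (N - 1) ^ 3 * N) ≤ (ε / 6) ^ 2 := by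
  have hpos : 0 < 6 * (N ^ 2 - 1) := by nlinarith
  rw [div_pow, mul_pow, mul_pow, Real.sq_sqrt hpos.le, div_mul_eq_mul_div,
    div_le_iff₀ (by positivity)]
  have hpoly : 3 * (N - 1) ^ 2 ≤ N ^ 3 * (N + 1) := by nlinarith
  have hN1 : 0 ≤ N * (N - 1) := by nlinarith
  nlinarith [mul_nonneg (mul_nonneg (sq_nonneg ε) hN1) (sub_nonneg.2 hpoly)]

theorem stmt11_general {V : Type} [Fintype V] [DecidableEq V]
    (G : SimpleGraph V) [DecidableRel G.Adj] (hconn : G.Connected)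
    (F S1 : Finset V)
    (hS1ne : S1.Nonempty)
    (hFS1 : Disjoint F S1)
    (n : ℕ) (hn : n = Fintype.card V) (hn2 : 2 ≤ n)
    (LF : Matrix F F ℝ)
    (hLF : LF = (G.lapMatrix ℝ).submatrix (fun i : F => (i : V)) (fun i : F => (i : V)))
    (hPD : LF.PosDef) (hnn : ∀ i j : F, 0 ≤ LF⁻¹ i j)
    (ε : ℝ) (hε0 : 0 < ε)
    (δ₁ : ℝ) (hδ₁ : δ₁ = ε / (2 * (n : ℝ) ^ 2 * Real.sqrt (6 * ((n : ℝ) ^ 2 - 1))))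
    (ht : F → ℝ) (hht : ht = LF⁻¹ *ᵥ (1 : F → ℝ))
    (h : F → ℝ)
    (hsolve : Real.sqrt ((h - ht) ⬝ᵥ (LF *ᵥ (h - ht)))
        ≤ δ₁ * Real.sqrt (ht ⬝ᵥ (LF *ᵥ ht))) :
    ∀ i : F, (1 - ε / 6) * ht i ≤ h i ∧ h i ≤ (1 + ε / 6) * ht i := by
  intro i
  obtain ⟨s, hs⟩ := hS1ne
  have hn2' : (2 : ℝ) ≤ n := by exact_mod_cast hn2
  have hnorm : ht ⬝ᵥ LF *ᵥ ht ≤ 2 * ((n : ℝ) - 1) ^ 3 := by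
    subst hLF hn hht
    exact hconn.inv_mulVec_one_dotProduct_groundedLapMatrix_le (disjoint_right.1 hFS1 hs) hPD
  have herr : (h - ht) ⬝ᵥ LF *ᵥ (h - ht) ≤ δ₁ ^ 2 * (ht ⬝ᵥ LF *ᵥ ht) := by
    have hQ : 0 ≤ ht ⬝ᵥ LF *ᵥ ht := by simpa using hPD.posSemidef.dotProduct_mulVec_nonneg ht
    simpa [mul_pow, Real.sq_sqrt hQ] using (Real.sqrt_le_iff.1 hsolve).2
  have hdiag : LF i i ≤ n := by
    subst hLF hn
    exact G.lapMatrix_apply_self_le_card i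
  have hrel := hht ▸ hPD.sq_sub_inv_mulVec_one_apply_le_mul_sq hnn h i
  have hQ0 : 0 ≤ (h - ht) ⬝ᵥ LF *ᵥ (h - ht) := by
    simpa using hPD.posSemidef.dotProduct_mulVec_nonneg (h - ht)
  have hkey : (h i - ht i) ^ 2 ≤ (ε / 6 * ht i) ^ 2 := calc
    (h i - ht i) ^ 2 ≤ n * (δ₁ ^ 2 * (2 * ((n : ℝ) - 1) ^ 3)) * ht i ^ 2 :=
        hrel.trans (by gcongr; exact herr.trans (by gcongr))
    _ = (ε / (2 * (n : ℝ) ^ 2 * √(6 * ((n : ℝ) ^ 2 - 1)))) ^ 2 * (2 * ((n : ℝ) - 1) ^ 3 * n)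
          * ht i ^ 2 := by rw [hδ₁]; ring
    _ ≤ (ε / 6 * ht i) ^ 2 := by
        rw [mul_pow]
        gcongr
        exact sq_div_mul_sqrt_sq_mul_le hn2' ε
  have hti0 : 0 ≤ ht i := hht ▸ hPD.inv.diag_pos.le.trans (apply_self_le_mulVec_one hnn i)
  obtain ⟨hlo, hhi⟩ := abs_le_of_sq_le_sq' hkey (by positivity)
  exact ⟨by linarith, by linarith⟩

/-- Under the grounded Laplacian setup with `n ≥ 2`, let `0 < ε < 1/2` and
`δ₁ = ε/(2n²√(6(n²−1)))`.  Let `h̃ = L_F⁻¹ 𝟏` and suppose `h` satisfies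
`‖h − h̃‖_{L_F} ≤ δ₁ ‖h̃‖_{L_F}`.  Then for every `i ∈ F`:
`(1 − ε/6) h̃ᵢ ≤ hᵢ ≤ (1 + ε/6) h̃ᵢ`, i.e. `hᵢ` is an `(ε/6)`-approximation of
`𝟏ᵀ L_F⁻¹ eᵢ`. -/
theorem stmt11 {V : Type} [Fintype V] [DecidableEq V]
    (G : SimpleGraph V) [DecidableRel G.Adj] (hconn : G.Connected)
    (F S0 S1 : Finset V)
    (hFne : F.Nonempty) (hS1ne : S1.Nonempty)
    (hFS0 : Disjoint F S0) (hFS1 : Disjoint F S1) (hS0S1 : Disjoint S0 S1)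
    (hcover : F ∪ S0 ∪ S1 = Finset.univ)
    (n : ℕ) (hn : n = Fintype.card V) (hn2 : 2 ≤ n)
    (LF : Matrix F F ℝ)
    (hLF : LF = (G.lapMatrix ℝ).submatrix (fun i : F => (i : V)) (fun i : F => (i : V)))
    (hPD : LF.PosDef) (hnn : ∀ i j : F, 0 ≤ LF⁻¹ i j)
    (ε : ℝ) (hε0 : 0 < ε) (hε : ε < 1 / 2)
    (δ₁ : ℝ) (hδ₁ : δ₁ = ε / (2 * (n : ℝ) ^ 2 * Real.sqrt (6 * ((n : ℝ) ^ 2 - 1))))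
    (ht : F → ℝ) (hht : ht = LF⁻¹ *ᵥ (1 : F → ℝ))
    (h : F → ℝ)
    (hsolve : Real.sqrt ((h - ht) ⬝ᵥ (LF *ᵥ (h - ht)))
        ≤ δ₁ * Real.sqrt (ht ⬝ᵥ (LF *ᵥ ht))) :
    ∀ i : F, (1 - ε / 6) * ht i ≤ h i ∧ h i ≤ (1 + ε / 6) * ht i :=
  stmt11_general G hconn F S1 hS1ne hFS1 n hn hn2 LF hLF hPD hnn ε hε0 δ₁ hδ₁ ht hht h hsolve
end
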